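/- arXiv:1806.01093 — 6 statements merged into one kernel-verified Lean document; each statement's English description precedes it below -/
import Mathlib

section
/- If X ⊆ Y are finite sets, H is a hereditary family (downward closed family of finite sets), G = {H' ∈ H : H' ∩ Y = X} is non-empty, then the minimum size of a base (maximal element) of the family {G' \ X : G' ∈ G} is at least μ(H) − |Y|, where μ(F) denotes the minimum size over all bases (maximal elements under inclusion) of F. -/
/-- A family of finite sets is hereditary if it is closed under taking subsets. -/
def Hereditary {α : Type*} [DecidableEq α] (F : Finset (Finset α)) : Prop :=
  ∀ A ∈ F, ∀ B ⊆ A, B ∈ F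

/-- μ(F): the minimum size of a base (maximal member) of F. -/
noncomputable def mu {α : Type*} [DecidableEq α] (F : Finset (Finset α)) : ℕ :=
  sInf {n | ∃ B ∈ F, (∀ A ∈ F, ¬ B ⊂ A) ∧ B.card = n}

theorem stmt_0 {α : Type*} [DecidableEq α] (X Y : Finset α) (hXY : X ⊆ Y)
    (H : Finset (Finset α)) (hH : Hereditary H)
    (G : Finset (Finset α)) (hG : G = H.filter (fun A => A ∩ Y = X))
    (hGne : G.Nonempty) :
    mu H - Y.card ≤ mu (G.image (fun A => A \ X)) := by
  set F := G.image (fun A => A \ X) with hF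
  have hFne : F.Nonempty := hGne.image _
  -- the defining set of mu F is nonempty
  have hSne : {n | ∃ B ∈ F, (∀ A ∈ F, ¬ B ⊂ A) ∧ B.card = n}.Nonempty := by
    obtain ⟨B, hB, hBmax⟩ := F.exists_maximal hFne
    exact ⟨B.card, B, hB, fun A hA hlt => (Finset.ssubset_iff_subset_ne.mp hlt).2 (Finset.Subset.antisymm (Finset.ssubset_iff_subset_ne.mp hlt).1 (hBmax hA (Finset.ssubset_iff_subset_ne.mp hlt).1)), rfl⟩
  have hmem := Nat.sInf_mem hSne
  obtain ⟨B, hBF, hBmax, hBcard⟩ := hmem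
  -- B = G' \ X for some G' ∈ G
  obtain ⟨G', hG'G, hG'B⟩ := Finset.mem_image.mp hBF
  have hG'H : G' ∈ H := by
    rw [hG] at hG'G; exact (Finset.mem_filter.mp hG'G).1
  have hG'Y : G' ∩ Y = X := by
    rw [hG] at hG'G; exact (Finset.mem_filter.mp hG'G).2
  have hXG' : X ⊆ G' := fun x hx => by
    have : x ∈ G' ∩ Y := hG'Y ▸ hx
    exact (Finset.mem_inter.mp this).1
  -- extend G' to a maximal element C of H
  have hTne : (H.filter (fun A => G' ⊆ A)).Nonempty :=
    ⟨G', Finset.mem_filter.mpr ⟨hG'H, Finset.Subset.refl _⟩⟩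
  obtain ⟨C, hCT, hCmax'⟩ := Finset.exists_maximal hTne
  have hCmax : ∀ A ∈ H.filter (fun A => G' ⊆ A), ¬ C ⊂ A := fun A hA hlt => (Finset.ssubset_iff_subset_ne.mp hlt).2 (Finset.Subset.antisymm (Finset.ssubset_iff_subset_ne.mp hlt).1 (hCmax' hA (Finset.ssubset_iff_subset_ne.mp hlt).1))
  have hCH : C ∈ H := (Finset.mem_filter.mp hCT).1
  have hG'C : G' ⊆ C := (Finset.mem_filter.mp hCT).2
  have hCmaxH : ∀ A ∈ H, ¬ C ⊂ A := by
    intro A hA hlt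
    exact hCmax A (Finset.mem_filter.mpr ⟨hA, hG'C.trans hlt.subset⟩) hlt
  have hmuH : mu H ≤ C.card := Nat.sInf_le ⟨C, hCH, hCmaxH, rfl⟩
  -- D := (C \ Y) ∪ X is in G
  set D := (C \ Y) ∪ X with hD
  have hDC : D ⊆ C := Finset.union_subset (Finset.sdiff_subset) (hXG'.trans hG'C)
  have hDH : D ∈ H := hH C hCH D hDC
  have hDY : D ∩ Y = X := by
    rw [hD, Finset.union_inter_distrib_right, Finset.sdiff_inter_self,
      Finset.inter_eq_left.mpr hXY, Finset.empty_union]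
  have hDG : D ∈ G := by
    rw [hG]; exact Finset.mem_filter.mpr ⟨hDH, hDY⟩
  have hDF : D \ X ∈ F := Finset.mem_image.mpr ⟨D, hDG, rfl⟩
  -- B ⊆ D \ X
  have hBD : B ⊆ D \ X := by
    rw [← hG'B]
    intro x hx
    obtain ⟨hxG', hxX⟩ := Finset.mem_sdiff.mp hx
    have hxY : x ∉ Y := fun hxy => hxX (hG'Y ▸ Finset.mem_inter.mpr ⟨hxG', hxy⟩)
    exact Finset.mem_sdiff.mpr ⟨Finset.mem_union_left _ (Finset.mem_sdiff.mpr ⟨hG'C hxG', hxY⟩), hxX⟩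
  have hBeq : B = D \ X := by
    by_contra hne
    exact hBmax (D \ X) hDF (lt_of_le_of_ne hBD hne)
  -- C \ Y ⊆ B
  have hCYB : C \ Y ⊆ B := by
    rw [hBeq]
    intro x hx
    obtain ⟨hxC, hxY⟩ := Finset.mem_sdiff.mp hx
    exact Finset.mem_sdiff.mpr ⟨Finset.mem_union_left _ hx, fun hxX => hxY (hXY hxX)⟩
  -- card bound
  have hCsub : C ⊆ (C \ Y) ∪ Y := by
    intro x hx
    by_cases hxy : x ∈ Y
    · exact Finset.mem_union_right _ hxy
    · exact Finset.mem_union_left _ (Finset.mem_sdiff.mpr ⟨hx, hxy⟩)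
  have : C.card ≤ B.card + Y.card :=
    calc C.card ≤ ((C \ Y) ∪ Y).card := Finset.card_le_card hCsub
      _ ≤ (C \ Y).card + Y.card := Finset.card_union_le _ _
      _ ≤ B.card + Y.card := by
          exact Nat.add_le_add_right (Finset.card_le_card hCYB) _
  have hmu : mu F = B.card := hBcard.symm
  omega
end

section
/- Let 0 ≤ t ≤ u ≤ r, s ≥ r + t − u, and let H be a hereditary family with μ(H) ≥ r + s − t. If T is a t-element subset of a u-element set U such that H^(r)(U) = {A ∈ H : |A| = r, U ⊆ A} is non-empty, then |{A ∈ H : |A| = s, A ∩ U = T}| ≥ (C(μ(H) − r, s + u − r − t) / C(s − t, s + u − r − t)) · |H^(r)(U)|, where C(n,k) denotes the binomial coefficient. -/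
/-- Every member of `H` is contained in a maximal member, whose cardinality is at least `mu H`. -/
lemma exists_base {α : Type*} [DecidableEq α] (H : Finset (Finset α)) {A : Finset α}
    (hA : A ∈ H) : ∃ M ∈ H, A ⊆ M ∧ (∀ B ∈ H, ¬ M ⊂ B) ∧ mu H ≤ M.card := by
  obtain ⟨M, hM, hMmax⟩ := Finset.exists_max_image (H.filter (fun C => A ⊆ C)) Finset.card
    ⟨A, by simp [hA]⟩
  simp only [Finset.mem_filter] at hM
  have hmax : ∀ B ∈ H, ¬ M ⊂ B := by
    intro B hB hMB
    have hAB : A ⊆ B := hM.2.trans hMB.subset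
    have := hMmax B (by simp [hB, hAB])
    exact absurd (Finset.card_lt_card hMB) (not_lt.2 this)
  refine ⟨M, hM.1, hM.2, hmax, Nat.sInf_le ⟨M, hM.1, hmax, rfl⟩⟩

/-- Borg's lemma (counting form): for a hereditary family `H` and `p ≤ q`,
`|H^(p)| * C(mu H - p, q - p) ≤ |H^(q)| * C(q, q - p)`. -/
lemma borg {α : Type*} [DecidableEq α] (H : Finset (Finset α)) (hH : Hereditary H)
    (p q : ℕ) (hpq : p ≤ q) :
    (H.filter (fun A => A.card = p)).card * Nat.choose (mu H - p) (q - p)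
      ≤ (H.filter (fun A => A.card = q)).card * Nat.choose q (q - p) := by
  set Hp := H.filter (fun A => A.card = p) with hHp
  set Hq := H.filter (fun A => A.card = q) with hHq
  have inner : ∀ A ∈ Hp,
      Nat.choose (mu H - p) (q - p) ≤ (Hq.filter (fun B => A ⊆ B)).card := by
    intro A hA
    rw [hHp, Finset.mem_filter] at hA
    obtain ⟨hAH, hAcard⟩ := hA
    obtain ⟨M, hMH, hAM, _, hmuM⟩ := exists_base H hAH
    calc Nat.choose (mu H - p) (q - p)
        ≤ Nat.choose (M.card - p) (q - p) :=
          Nat.choose_le_choose _ (Nat.sub_le_sub_right hmuM p)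
      _ = ((M \ A).powersetCard (q - p)).card := by
          rw [Finset.card_powersetCard, Finset.card_sdiff_of_subset hAM, hAcard]
      _ ≤ (Hq.filter (fun B => A ⊆ B)).card := by
          apply Finset.card_le_card_of_injOn (fun C => A ∪ C)
          · intro C hC
            rw [Finset.mem_coe, Finset.mem_powersetCard] at hC
            obtain ⟨hCM, hCcard⟩ := hC
            have hCA : Disjoint A C := by
              refine Finset.disjoint_left.2 fun x hxA hxC => ?_
              exact (Finset.mem_sdiff.1 (hCM hxC)).2 hxA
            have hsub : A ∪ C ⊆ M := Finset.union_subset hAM (hCM.trans Finset.sdiff_subset)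
            rw [hHq, Finset.mem_coe, Finset.mem_filter, Finset.mem_filter]
            refine ⟨⟨hH M hMH _ hsub, ?_⟩, Finset.subset_union_left⟩
            rw [Finset.card_union_of_disjoint hCA, hAcard, hCcard]
            omega
          · intro C₁ h₁ C₂ h₂ h
            rw [Finset.mem_coe, Finset.mem_powersetCard] at h₁ h₂
            have h' : A ∪ C₁ = A ∪ C₂ := h
            have d₁ : Disjoint A C₁ := by
              refine Finset.disjoint_left.2 fun x hxA hxC => ?_
              exact (Finset.mem_sdiff.1 (h₁.1 hxC)).2 hxA
            have d₂ : Disjoint A C₂ := by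
              refine Finset.disjoint_left.2 fun x hxA hxC => ?_
              exact (Finset.mem_sdiff.1 (h₂.1 hxC)).2 hxA
            have : (A ∪ C₁) \ A = (A ∪ C₂) \ A := by rw [h']
            rwa [Finset.union_sdiff_cancel_left d₁, Finset.union_sdiff_cancel_left d₂] at this
  have outer : ∀ B ∈ Hq, (Hp.filter (fun A => A ⊆ B)).card ≤ Nat.choose q (q - p) := by
    intro B hB
    rw [hHq, Finset.mem_filter] at hB
    rw [Nat.choose_symm hpq]
    calc (Hp.filter (fun A => A ⊆ B)).card ≤ (B.powersetCard p).card := by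
          apply Finset.card_le_card
          intro A hA
          rw [Finset.mem_filter, hHp, Finset.mem_filter] at hA
          rw [Finset.mem_powersetCard]
          exact ⟨hA.2, hA.1.2⟩
      _ = Nat.choose q p := by rw [Finset.card_powersetCard, hB.2]
  have swap : ∑ A ∈ Hp, (Hq.filter (fun B => A ⊆ B)).card
      = ∑ B ∈ Hq, (Hp.filter (fun A => A ⊆ B)).card := by
    simp only [Finset.card_filter]
    exact Finset.sum_comm
  calc Hp.card * Nat.choose (mu H - p) (q - p)
      = ∑ _A ∈ Hp, Nat.choose (mu H - p) (q - p) := by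
        rw [Finset.sum_const, smul_eq_mul]
    _ ≤ ∑ A ∈ Hp, (Hq.filter (fun B => A ⊆ B)).card := Finset.sum_le_sum inner
    _ = ∑ B ∈ Hq, (Hp.filter (fun A => A ⊆ B)).card := swap
    _ ≤ ∑ _B ∈ Hq, Nat.choose q (q - p) := Finset.sum_le_sum outer
    _ = Hq.card * Nat.choose q (q - p) := by rw [Finset.sum_const, smul_eq_mul]

theorem stmt_2 {α : Type*} [DecidableEq α] (t u r s : ℕ)
    (htu : t ≤ u) (hur : u ≤ r) (hs : r + t - u ≤ s)
    (H : Finset (Finset α)) (hH : Hereditary H) (hmu : r + s - t ≤ mu H)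
    (T U : Finset α) (hTU : T ⊆ U) (hT : T.card = t) (hU : U.card = u)
    (hne : (H.filter (fun A => A.card = r ∧ U ⊆ A)).Nonempty) :
    ((Nat.choose (mu H - r) (s + u - r - t) : ℚ) / (Nat.choose (s - t) (s + u - r - t) : ℚ))
      * ((H.filter (fun A => A.card = r ∧ U ⊆ A)).card : ℚ)
    ≤ ((H.filter (fun A => A.card = s ∧ A ∩ U = T)).card : ℚ) := by
  classical
  -- the link family
  set G : Finset (Finset α) := (H.filter (fun A => U ⊆ A)).image (· \ U) with hGdef
  have memG : ∀ B : Finset α, B ∈ G ↔ Disjoint B U ∧ B ∪ U ∈ H := by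
    intro B
    constructor
    · rintro hB
      rw [hGdef, Finset.mem_image] at hB
      obtain ⟨A, hA, rfl⟩ := hB
      rw [Finset.mem_filter] at hA
      refine ⟨Finset.sdiff_disjoint, ?_⟩
      rw [Finset.sdiff_union_self_eq_union, Finset.union_eq_left.2 hA.2]
      exact hA.1
    · rintro ⟨hd, hBU⟩
      rw [hGdef, Finset.mem_image]
      exact ⟨B ∪ U, Finset.mem_filter.2 ⟨hBU, Finset.subset_union_right⟩, by
        rw [Finset.union_sdiff_cancel_right hd]⟩
  have hG : Hereditary G := by
    intro B hB C hCB
    rw [memG] at hB ⊢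
    refine ⟨Finset.disjoint_of_subset_left hCB hB.1, ?_⟩
    exact hH _ hB.2 _ (Finset.union_subset_union_left hCB)
  -- |G^(r-u)| = |H^(r)(U)|
  have hcard1 : (G.filter (fun B => B.card = r - u)).card
      = (H.filter (fun A => A.card = r ∧ U ⊆ A)).card := by
    apply Finset.card_nbij' (fun B => B ∪ U) (fun A => A \ U)
    · intro B hB
      rw [Finset.mem_coe, Finset.mem_filter, memG] at hB
      obtain ⟨⟨hd, hBU⟩, hBcard⟩ := hB
      rw [Finset.mem_coe, Finset.mem_filter]
      refine ⟨hBU, ?_, Finset.subset_union_right⟩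
      rw [Finset.card_union_of_disjoint hd, hBcard, hU]
      omega
    · intro A hA
      rw [Finset.mem_coe, Finset.mem_filter] at hA
      obtain ⟨hAH, hAcard, hUA⟩ := hA
      rw [Finset.mem_coe, Finset.mem_filter, memG]
      refine ⟨⟨Finset.sdiff_disjoint, ?_⟩, ?_⟩
      · rwa [Finset.sdiff_union_self_eq_union, Finset.union_eq_left.2 hUA]
      · rw [Finset.card_sdiff_of_subset hUA, hAcard, hU]
    · intro B hB
      rw [Finset.mem_coe, Finset.mem_filter, memG] at hB
      exact Finset.union_sdiff_cancel_right hB.1.1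
    · intro A hA
      rw [Finset.mem_coe, Finset.mem_filter] at hA
      show A \ U ∪ U = A
      rw [Finset.sdiff_union_self_eq_union, Finset.union_eq_left.2 hA.2.2]
  -- |G^(s-t)| ≤ |{A ∈ H : |A| = s, A ∩ U = T}|
  have hcard2 : (G.filter (fun B => B.card = s - t)).card
      ≤ (H.filter (fun A => A.card = s ∧ A ∩ U = T)).card := by
    apply Finset.card_le_card_of_injOn (fun B => B ∪ T)
    · intro B hB
      rw [Finset.mem_coe, Finset.mem_filter, memG] at hB
      obtain ⟨⟨hd, hBU⟩, hBcard⟩ := hB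
      have hdT : Disjoint B T := Finset.disjoint_of_subset_right hTU hd
      rw [Finset.mem_coe, Finset.mem_filter]
      refine ⟨hH _ hBU _ (Finset.union_subset_union_right hTU), ?_, ?_⟩
      · rw [Finset.card_union_of_disjoint hdT, hBcard, hT]
        have hts : t ≤ s := by omega
        omega
      · rw [Finset.union_inter_distrib_right, Finset.disjoint_iff_inter_eq_empty.1 hd,
          Finset.empty_union, Finset.inter_eq_left.2 hTU]
    · intro B₁ h₁ B₂ h₂ h
      rw [Finset.mem_coe, Finset.mem_filter, memG] at h₁ h₂
      have e₁ : (B₁ ∪ T) \ U = B₁ := by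
        rw [Finset.union_sdiff_distrib, Finset.sdiff_eq_self_of_disjoint h₁.1.1,
          Finset.sdiff_eq_empty_iff_subset.2 hTU, Finset.union_empty]
      have e₂ : (B₂ ∪ T) \ U = B₂ := by
        rw [Finset.union_sdiff_distrib, Finset.sdiff_eq_self_of_disjoint h₂.1.1,
          Finset.sdiff_eq_empty_iff_subset.2 hTU, Finset.union_empty]
      have h' : B₁ ∪ T = B₂ ∪ T := h
      rw [← e₁, ← e₂, h']
  -- mu H - u ≤ mu G
  have hGne : G.Nonempty := by
    obtain ⟨A, hA⟩ := hne
    rw [Finset.mem_filter] at hA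
    exact ⟨A \ U, Finset.mem_image.2 ⟨A, Finset.mem_filter.2 ⟨hA.1, hA.2.2⟩, rfl⟩⟩
  have hmuG : mu H - u ≤ mu G := by
    have hSne : {n | ∃ B ∈ G, (∀ A ∈ G, ¬ B ⊂ A) ∧ B.card = n}.Nonempty := by
      obtain ⟨B, hB⟩ := hGne
      obtain ⟨M, hM, _, hmax, _⟩ := exists_base G hB
      exact ⟨M.card, M, hM, hmax, rfl⟩
    have hmem := Nat.sInf_mem hSne
    obtain ⟨B, hBG, hBmax, hBcard⟩ := hmem
    rw [memG] at hBG
    obtain ⟨hd, hBU⟩ := hBG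
    -- B ∪ U is maximal in H
    have hmaxH : ∀ A ∈ H, ¬ B ∪ U ⊂ A := by
      intro A hA hss
      obtain ⟨x, hxA, hxBU⟩ := Finset.exists_of_ssubset hss
      rw [Finset.mem_union, not_or] at hxBU
      have hin : insert x B ∪ U ∈ H := by
        apply hH A hA
        rw [Finset.insert_union]
        exact Finset.insert_subset hxA hss.subset
      have hins : insert x B ∈ G := by
        rw [memG]
        exact ⟨Finset.disjoint_insert_left.2 ⟨hxBU.2, hd⟩, hin⟩
      exact hBmax _ hins (Finset.ssubset_insert hxBU.1)
    have : mu H ≤ (B ∪ U).card := Nat.sInf_le ⟨B ∪ U, hBU, hmaxH, rfl⟩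
    rw [Finset.card_union_of_disjoint hd, hU] at this
    have hGeq : mu G = sInf {n | ∃ B ∈ G, (∀ A ∈ G, ¬ B ⊂ A) ∧ B.card = n} := rfl
    omega
  -- apply Borg's lemma to G
  have hpq : r - u ≤ s - t := by omega
  have hB := borg G hG (r - u) (s - t) hpq
  have hk : s - t - (r - u) = s + u - r - t := by omega
  rw [hk, hcard1] at hB
  have hmono : Nat.choose (mu H - r) (s + u - r - t) ≤ Nat.choose (mu G - (r - u)) (s + u - r - t) :=
    Nat.choose_le_choose _ (by omega)
  have key : (H.filter (fun A => A.card = r ∧ U ⊆ A)).card * Nat.choose (mu H - r) (s + u - r - t)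
      ≤ (H.filter (fun A => A.card = s ∧ A ∩ U = T)).card * Nat.choose (s - t) (s + u - r - t) := by
    calc (H.filter (fun A => A.card = r ∧ U ⊆ A)).card * Nat.choose (mu H - r) (s + u - r - t)
        ≤ (H.filter (fun A => A.card = r ∧ U ⊆ A)).card
            * Nat.choose (mu G - (r - u)) (s + u - r - t) :=
          Nat.mul_le_mul_left _ hmono
      _ ≤ (G.filter (fun B => B.card = s - t)).card * Nat.choose (s - t) (s + u - r - t) := hB
      _ ≤ (H.filter (fun A => A.card = s ∧ A ∩ U = T)).card
            * Nat.choose (s - t) (s + u - r - t) := Nat.mul_le_mul_right _ hcard2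
  have hpos : (0 : ℚ) < (Nat.choose (s - t) (s + u - r - t) : ℚ) := by
    exact_mod_cast Nat.choose_pos (by omega)
  rw [div_mul_eq_mul_div, div_le_iff₀ hpos]
  calc ((Nat.choose (mu H - r) (s + u - r - t) : ℚ))
        * ((H.filter (fun A => A.card = r ∧ U ⊆ A)).card : ℚ)
      = (((H.filter (fun A => A.card = r ∧ U ⊆ A)).card
          * Nat.choose (mu H - r) (s + u - r - t) : ℕ) : ℚ) := by push_cast; ring
    _ ≤ (((H.filter (fun A => A.card = s ∧ A ∩ U = T)).card
          * Nat.choose (s - t) (s + u - r - t) : ℕ) : ℚ) := by exact_mod_cast key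
    _ = ((H.filter (fun A => A.card = s ∧ A ∩ U = T)).card : ℚ)
          * (Nat.choose (s - t) (s + u - r - t) : ℚ) := by push_cast; ring
end

section
/- Let 1 ≤ t ≤ r ≤ s and let H be a hereditary family with μ(H) ≥ r + s − t + 1. Let I ∈ H with t ≤ |I| ≤ r, let A = {A ∈ H : |A| = r, I ⊆ A}, and let B = {B ∈ H : |B| = s, |B ∩ I| ≥ t}. Then |A| + |B| ≤ |H^(s)|, and equality holds only if t = 1 and μ(H) = r + s. -/
open Finset

section Aux

variable {α : Type*} [DecidableEq α]

/-- Double counting for bipartite incidences. -/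
lemma aux_sum_filter_swap (S T : Finset (Finset α)) (p : Finset α → Finset α → Prop)
    [∀ a b, Decidable (p a b)] :
    ∑ a ∈ S, (T.filter (fun b => p a b)).card
      = ∑ b ∈ T, (S.filter (fun a => p a b)).card := by
  simp only [Finset.card_filter]
  exact Finset.sum_comm

/-- Every member of a finite family extends to a base. -/
lemma aux_exists_base (H : Finset (Finset α)) (E : Finset α) (hE : E ∈ H) :
    ∃ M ∈ H, E ⊆ M ∧ ∀ A ∈ H, ¬ M ⊂ A := by
  obtain ⟨M, hM, hmax⟩ := (H.filter (fun X => E ⊆ X)).exists_maximal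
    ⟨E, mem_filter.2 ⟨hE, subset_rfl⟩⟩
  rw [mem_filter] at hM
  refine ⟨M, hM.1, hM.2, fun A hA hMA => ?_⟩
  exact lt_irrefl M (lt_of_lt_of_le hMA (hmax (mem_filter.2 ⟨hA, hM.2.trans hMA.subset⟩) hMA.subset))

/-- Counting lower bound: the number of `k`-subsets of `P ∪ Q` meeting `Q` in
at most `t-1` points is at least `C(s,k)`. -/
lemma aux_count_ge (P Q : Finset α) (hd : Disjoint P Q) (k s t : ℕ)
    (hk : k ≤ s) (ht : 1 ≤ t) (htQ : t ≤ Q.card) (hPt : s ≤ P.card + (t - 1)) :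
    s.choose k ≤ (((P ∪ Q).powersetCard k).filter
      (fun F => (F ∩ Q).card ≤ t - 1)).card := by
  obtain ⟨P', hP'sub, hP'card⟩ := Finset.exists_subset_card_eq
    (s := P) (n := min s P.card) (min_le_right _ _)
  obtain ⟨Q', hQ'sub, hQ'card⟩ := Finset.exists_subset_card_eq
    (s := Q) (n := s - min s P.card) (by omega)
  have hdisj : Disjoint P' Q' := hd.mono hP'sub hQ'sub
  have hX₀card : (P' ∪ Q').card = s := by
    rw [Finset.card_union_of_disjoint hdisj]; omega
  have hsub : (P' ∪ Q').powersetCard k ⊆ ((P ∪ Q).powersetCard k).filter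
      (fun F => (F ∩ Q).card ≤ t - 1) := by
    intro F hF
    rw [Finset.mem_powersetCard] at hF
    rw [Finset.mem_filter, Finset.mem_powersetCard]
    refine ⟨⟨hF.1.trans (Finset.union_subset_union hP'sub hQ'sub), hF.2⟩, ?_⟩
    have h1 : F ∩ Q ⊆ Q' := by
      intro x hx
      rw [Finset.mem_inter] at hx
      rcases Finset.mem_union.1 (hF.1 hx.1) with h | h
      · exact absurd hx.2 (Finset.disjoint_left.1 hd (hP'sub h))
      · exact h
    calc (F ∩ Q).card ≤ Q'.card := Finset.card_le_card h1
      _ ≤ t - 1 := by omega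
  calc s.choose k = ((P' ∪ Q').powersetCard k).card := by
        rw [Finset.card_powersetCard, hX₀card]
    _ ≤ _ := Finset.card_le_card hsub

/-- Strict counting lower bound. -/
lemma aux_count_gt (P Q : Finset α) (hd : Disjoint P Q) (k s t : ℕ)
    (hk : k ≤ s) (hk1 : 1 ≤ k) (ht : 1 ≤ t) (htQ : t ≤ Q.card)
    (hPt : s ≤ P.card + (t - 1)) (hstrict : 2 ≤ t ∨ s + 1 ≤ P.card) :
    s.choose k + 1 ≤ (((P ∪ Q).powersetCard k).filter
      (fun F => (F ∩ Q).card ≤ t - 1)).card := by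
  obtain ⟨P', hP'sub, hP'card⟩ := Finset.exists_subset_card_eq
    (s := P) (n := min s P.card) (min_le_right _ _)
  obtain ⟨Q', hQ'sub, hQ'card⟩ := Finset.exists_subset_card_eq
    (s := Q) (n := s - min s P.card) (by omega)
  have hdisj : Disjoint P' Q' := hd.mono hP'sub hQ'sub
  have hX₀card : (P' ∪ Q').card = s := by
    rw [Finset.card_union_of_disjoint hdisj]; omega
  have hsub : (P' ∪ Q').powersetCard k ⊆ ((P ∪ Q).powersetCard k).filter
      (fun F => (F ∩ Q).card ≤ t - 1) := by
    intro F hF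
    rw [Finset.mem_powersetCard] at hF
    rw [Finset.mem_filter, Finset.mem_powersetCard]
    refine ⟨⟨hF.1.trans (Finset.union_subset_union hP'sub hQ'sub), hF.2⟩, ?_⟩
    have h1 : F ∩ Q ⊆ Q' := by
      intro x hx
      rw [Finset.mem_inter] at hx
      rcases Finset.mem_union.1 (hF.1 hx.1) with h | h
      · exact absurd hx.2 (Finset.disjoint_left.1 hd (hP'sub h))
      · exact h
    calc (F ∩ Q).card ≤ Q'.card := Finset.card_le_card h1
      _ ≤ t - 1 := by omega
  -- produce an extra member F₀ of the filter, not a subset of X₀ = P' ∪ Q'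
  have hF₀ : ∃ F₀, F₀ ∈ ((P ∪ Q).powersetCard k).filter
      (fun F => (F ∩ Q).card ≤ t - 1) ∧ ¬ F₀ ⊆ P' ∪ Q' := by
    rcases hstrict with htt | hPP
    · -- t ≥ 2 : pick y ∈ Q \ Q'
      obtain ⟨Q'', hQ''sub, hQ''card⟩ := Finset.exists_subset_card_eq
        (s := Q') (n := min (t - 2) Q'.card) (min_le_right _ _)
      have hX₁card : (P' ∪ Q'').card = min s P.card + min (t - 2) Q'.card := by
        rw [Finset.card_union_of_disjoint (hd.mono hP'sub (hQ''sub.trans hQ'sub)), hP'card,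
          hQ''card]
      obtain ⟨F', hF'sub, hF'card⟩ := Finset.exists_subset_card_eq
        (s := P' ∪ Q'') (n := k - 1) (by omega)
      have hy : ∃ y ∈ Q, y ∉ Q' := by
        by_contra hcon
        push_neg at hcon
        have := Finset.card_le_card hcon
        omega
      obtain ⟨y, hyQ, hyQ'⟩ := hy
      have hyP' : y ∉ P' := fun h => Finset.disjoint_left.1 hd (hP'sub h) hyQ
      have hyF' : y ∉ F' := fun h => by
        rcases Finset.mem_union.1 (hF'sub h) with h' | h'
        · exact hyP' h'
        · exact hyQ' (hQ''sub h')
      refine ⟨insert y F', ?_, ?_⟩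
      · rw [Finset.mem_filter, Finset.mem_powersetCard]
        refine ⟨⟨?_, ?_⟩, ?_⟩
        · intro x hx
          rcases Finset.mem_insert.1 hx with rfl | hx'
          · exact Finset.mem_union_right _ hyQ
          · exact Finset.union_subset_union hP'sub (hQ''sub.trans hQ'sub) (hF'sub hx')
        · rw [Finset.card_insert_of_notMem hyF', hF'card]; omega
        · have h2 : (insert y F') ∩ Q ⊆ insert y Q'' := by
            intro x hx
            rw [Finset.mem_inter] at hx
            rcases Finset.mem_insert.1 hx.1 with rfl | hx'
            · exact Finset.mem_insert_self _ _
            · rcases Finset.mem_union.1 (hF'sub hx') with h' | h'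
              · exact absurd hx.2 (Finset.disjoint_left.1 hd (hP'sub h'))
              · exact Finset.mem_insert_of_mem h'
          calc ((insert y F') ∩ Q).card ≤ (insert y Q'').card := Finset.card_le_card h2
            _ ≤ Q''.card + 1 := Finset.card_insert_le _ _
            _ ≤ t - 1 := by omega
      · intro hcon
        have := hcon (Finset.mem_insert_self y F')
        rcases Finset.mem_union.1 this with h' | h'
        · exact hyP' h'
        · exact hyQ' h'
    · -- |P| ≥ s+1 : pick y ∈ P \ P'
      have hy : ∃ y ∈ P, y ∉ P' := by
        by_contra hcon
        push_neg at hcon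
        have := Finset.card_le_card hcon
        omega
      obtain ⟨y, hyP, hyP'⟩ := hy
      obtain ⟨F', hF'sub, hF'card⟩ := Finset.exists_subset_card_eq
        (s := P') (n := k - 1) (by omega)
      have hyF' : y ∉ F' := fun h => hyP' (hF'sub h)
      have hins : insert y F' ⊆ P := by
        intro x hx
        rcases Finset.mem_insert.1 hx with rfl | hx'
        · exact hyP
        · exact hP'sub (hF'sub hx')
      refine ⟨insert y F', ?_, ?_⟩
      · rw [Finset.mem_filter, Finset.mem_powersetCard]
        refine ⟨⟨fun x hx => Finset.mem_union_left _ (hins hx), ?_⟩, ?_⟩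
        · rw [Finset.card_insert_of_notMem hyF', hF'card]; omega
        · have : (insert y F') ∩ Q = ∅ :=
            Finset.eq_empty_of_forall_notMem (fun x hx => by
              rw [Finset.mem_inter] at hx
              exact Finset.disjoint_left.1 hd (hins hx.1) hx.2)
          rw [this]; simp
      · intro hcon
        have := hcon (Finset.mem_insert_self y F')
        rcases Finset.mem_union.1 this with h' | h'
        · exact hyP' h'
        · exact Finset.disjoint_left.1 hd hyP (hQ'sub h')
  obtain ⟨F₀, hF₀mem, hF₀not⟩ := hF₀
  have hss : (P' ∪ Q').powersetCard k ⊂ ((P ∪ Q).powersetCard k).filter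
      (fun F => (F ∩ Q).card ≤ t - 1) := by
    refine (Finset.ssubset_iff_of_subset hsub).2 ⟨F₀, hF₀mem, ?_⟩
    rw [Finset.mem_powersetCard]
    exact fun h => hF₀not h.1
  have := Finset.card_lt_card hss
  rw [Finset.card_powersetCard, hX₀card] at this
  omega

/-- Degree lower bound for members of 𝒜. -/
lemma aux_deg_low (H : Finset (Finset α)) (hH : Hereditary H)
    (t r s : ℕ) (ht : 1 ≤ t) (htr : t ≤ r) (hrs : r ≤ s)
    (hmu : r + s - t + 1 ≤ mu H)
    (I : Finset α) (hIt : t ≤ I.card) (hIr : I.card ≤ r)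
    (A' : Finset α) (hA'H : A' ∈ H) (hA'card : A'.card = r) (hIA' : I ⊆ A')
    (ε : ℕ) (hε : ε = 0 ∨ (ε = 1 ∧ (2 ≤ t ∨ r + s + 1 ≤ mu H))) :
    s.choose (s - (r - I.card)) + ε ≤
      ((H.filter (fun D => D.card = s ∧ (D ∩ I).card ≤ t - 1)).filter
        (fun D => A' \ I ⊆ D)).card := by
  obtain ⟨M, hMH, hA'M, hMmax⟩ := aux_exists_base H A' hA'H
  have hmuM : mu H ≤ M.card := Nat.sInf_le ⟨M, hMH, hMmax, rfl⟩
  have hMcard : r + s - t + 1 ≤ M.card := le_trans hmu hmuM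
  set q := I.card with hq
  set k := s - (r - q) with hkdef
  set P := M \ A' with hPdef
  have hPI : Disjoint P I := by
    rw [Finset.disjoint_left]
    intro x hx hxI
    exact (Finset.mem_sdiff.1 hx).2 (hIA' hxI)
  have hPcard : P.card = M.card - r := by
    rw [hPdef, Finset.card_sdiff_of_subset hA'M, hA'card]
  have hk : k ≤ s := by omega
  have hPt : s ≤ P.card + (t - 1) := by omega
  have hEcard : (A' \ I).card = r - q := by
    rw [Finset.card_sdiff_of_subset hIA', hA'card]
  have hIM : I ⊆ M := hIA'.trans hA'M
  -- injection F ↦ (A' \ I) ∪ F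
  have hinj : (((P ∪ I).powersetCard k).filter (fun F => (F ∩ I).card ≤ t - 1)).card ≤
      ((H.filter (fun D => D.card = s ∧ (D ∩ I).card ≤ t - 1)).filter
        (fun D => A' \ I ⊆ D)).card := by
    apply Finset.card_le_card_of_injOn (fun F => (A' \ I) ∪ F)
    · intro F hF
      rw [Finset.mem_coe, Finset.mem_filter, Finset.mem_powersetCard] at hF
      obtain ⟨⟨hFsub, hFcard⟩, hFI⟩ := hF
      have hdisjEF : Disjoint (A' \ I) F := by
        rw [Finset.disjoint_left]
        intro x hx hxF
        rw [Finset.mem_sdiff] at hx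
        rcases Finset.mem_union.1 (hFsub hxF) with h' | h'
        · exact (Finset.mem_sdiff.1 h').2 hx.1
        · exact hx.2 h'
      have hsubM : (A' \ I) ∪ F ⊆ M := by
        apply Finset.union_subset ((Finset.sdiff_subset).trans hA'M)
        exact hFsub.trans (Finset.union_subset (Finset.sdiff_subset) hIM)
      rw [Finset.mem_coe, Finset.mem_filter, Finset.mem_filter]
      refine ⟨⟨hH M hMH _ hsubM, ?_, ?_⟩, Finset.subset_union_left⟩
      · rw [Finset.card_union_of_disjoint hdisjEF, hEcard, hFcard]; omega
      · have : ((A' \ I) ∪ F) ∩ I = F ∩ I := by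
          rw [Finset.union_inter_distrib_right, Finset.sdiff_inter_self,
            Finset.empty_union]
        rw [this]; exact hFI
    · intro F₁ h₁ F₂ h₂ heq
      simp only [Finset.coe_filter, Set.mem_setOf_eq] at h₁ h₂
      have d₁ : Disjoint (A' \ I) F₁ := by
        rw [Finset.mem_powersetCard] at h₁
        rw [Finset.disjoint_left]
        intro x hx hxF
        rw [Finset.mem_sdiff] at hx
        rcases Finset.mem_union.1 (h₁.1.1 hxF) with h' | h'
        · exact (Finset.mem_sdiff.1 h').2 hx.1
        · exact hx.2 h'
      have d₂ : Disjoint (A' \ I) F₂ := by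
        rw [Finset.mem_powersetCard] at h₂
        rw [Finset.disjoint_left]
        intro x hx hxF
        rw [Finset.mem_sdiff] at hx
        rcases Finset.mem_union.1 (h₂.1.1 hxF) with h' | h'
        · exact (Finset.mem_sdiff.1 h').2 hx.1
        · exact hx.2 h'
      have := congrArg (fun X => X \ (A' \ I)) heq
      simpa only [Finset.union_sdiff_cancel_left d₁,
        Finset.union_sdiff_cancel_left d₂] using this
  rcases hε with rfl | ⟨rfl, hstrict⟩
  · have := aux_count_ge P I hPI k s t hk ht hIt hPt
    omega
  · have hk1 : 1 ≤ k := by omega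
    have hstrict' : 2 ≤ t ∨ s + 1 ≤ P.card := by
      rcases hstrict with h | h
      · exact Or.inl h
      · right; omega
    have := aux_count_gt P I hPI k s t hk hk1 ht hIt hPt hstrict'
    omega

end Aux

theorem stmt_3 {α : Type*} [DecidableEq α] (t r s : ℕ)
    (ht : 1 ≤ t) (htr : t ≤ r) (hrs : r ≤ s)
    (H : Finset (Finset α)) (hH : Hereditary H) (hmu : r + s - t + 1 ≤ mu H)
    (I : Finset α) (hI : I ∈ H) (hIt : t ≤ I.card) (hIr : I.card ≤ r)
    (A B : Finset (Finset α))
    (hA : A = H.filter (fun A' => A'.card = r ∧ I ⊆ A'))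
    (hB : B = H.filter (fun B' => B'.card = s ∧ t ≤ (B' ∩ I).card)) :
    A.card + B.card ≤ (H.filter (fun C => C.card = s)).card ∧
      (A.card + B.card = (H.filter (fun C => C.card = s)).card →
        t = 1 ∧ mu H = r + s) := by
  classical
  set q := I.card with hq
  set k := s - (r - q) with hkdef
  set c := s.choose k with hcdef
  set R := H.filter (fun D => D.card = s ∧ (D ∩ I).card ≤ t - 1) with hRdef
  set Hs := H.filter (fun C => C.card = s) with hHsdef
  -- B and R partition Hs
  have hpart : B.card + R.card = Hs.card := by
    have h0 := Finset.card_filter_add_card_filter_not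
      (s := Hs) (p := fun D => t ≤ (D ∩ I).card)
    have h1 : Hs.filter (fun D => t ≤ (D ∩ I).card) = B := by
      rw [hHsdef, Finset.filter_filter, hB]
    have h2 : Hs.filter (fun D => ¬ t ≤ (D ∩ I).card) = R := by
      rw [hHsdef, Finset.filter_filter, hRdef]
      apply Finset.filter_congr
      intro D _
      constructor
      · rintro ⟨h, h'⟩; exact ⟨h, by omega⟩
      · rintro ⟨h, h'⟩; exact ⟨h, by omega⟩
    rw [h1, h2] at h0
    omega
  -- ε measures strictness
  set ε : ℕ := if t = 1 ∧ mu H = r + s then 0 else 1 with hεdef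
  have hεok : ε = 0 ∨ (ε = 1 ∧ (2 ≤ t ∨ r + s + 1 ≤ mu H)) := by
    rw [hεdef]
    split_ifs with h
    · exact Or.inl rfl
    · right
      refine ⟨rfl, ?_⟩
      by_cases h2 : 2 ≤ t
      · exact Or.inl h2
      · right
        have ht1 : t = 1 := by omega
        have : mu H ≠ r + s := fun hc => h ⟨ht1, hc⟩
        omega
  -- degree lower bound for A
  have hdegA : ∀ A' ∈ A, c + ε ≤ (R.filter (fun D => A' \ I ⊆ D)).card := by
    intro A' hA'
    rw [hA, Finset.mem_filter] at hA'
    exact aux_deg_low H hH t r s ht htr hrs hmu I hIt hIr A' hA'.1 hA'.2.1 hA'.2.2 ε hεok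
  -- degree upper bound for R
  have hdegR : ∀ D ∈ R, (A.filter (fun A' => A' \ I ⊆ D)).card ≤ c := by
    intro D hD
    rw [hRdef, Finset.mem_filter] at hD
    have hDs : D.card = s := hD.2.1
    have h1 : (A.filter (fun A' => A' \ I ⊆ D)).card ≤ (D.powersetCard (r - q)).card := by
      apply Finset.card_le_card_of_injOn (fun A' => A' \ I)
      · intro A' hA'
        rw [Finset.mem_coe, Finset.mem_filter, hA, Finset.mem_filter] at hA'
        rw [Finset.mem_coe, Finset.mem_powersetCard]
        exact ⟨hA'.2, by rw [Finset.card_sdiff_of_subset hA'.1.2.2, hA'.1.2.1]⟩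
      · intro A₁ h₁ A₂ h₂ heq
        have m₁ : I ⊆ A₁ := by
          have := Finset.mem_coe.1 h₁
          rw [Finset.mem_filter, hA, Finset.mem_filter] at this
          exact this.1.2.2
        have m₂ : I ⊆ A₂ := by
          have := Finset.mem_coe.1 h₂
          rw [Finset.mem_filter, hA, Finset.mem_filter] at this
          exact this.1.2.2
        have e : A₁ \ I = A₂ \ I := heq
        rw [← Finset.sdiff_union_of_subset m₁, ← Finset.sdiff_union_of_subset m₂, e]
    rw [Finset.card_powersetCard, hDs] at h1
    have hsymm : s.choose (r - q) = c := by
      rw [hcdef, hkdef, ← Nat.choose_symm (show r - q ≤ s by omega)]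
    omega
  -- double counting
  have hsum : ∑ A' ∈ A, (R.filter (fun D => A' \ I ⊆ D)).card
      = ∑ D ∈ R, (A.filter (fun A' => A' \ I ⊆ D)).card :=
    aux_sum_filter_swap A R (fun a b => a \ I ⊆ b)
  have hlow : A.card * (c + ε) ≤ ∑ A' ∈ A, (R.filter (fun D => A' \ I ⊆ D)).card := by
    have := Finset.card_nsmul_le_sum A
      (fun A' => (R.filter (fun D => A' \ I ⊆ D)).card) (c + ε) hdegA
    simpa [smul_eq_mul] using this
  have hhigh : ∑ D ∈ R, (A.filter (fun A' => A' \ I ⊆ D)).card ≤ R.card * c := by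
    have := Finset.sum_le_card_nsmul R
      (fun D => (A.filter (fun A' => A' \ I ⊆ D)).card) c hdegR
    simpa [smul_eq_mul] using this
  have hmain : A.card * (c + ε) ≤ R.card * c := by
    calc A.card * (c + ε) ≤ _ := hlow
      _ = _ := hsum
      _ ≤ _ := hhigh
  have hcpos : 0 < c := Nat.choose_pos (by omega)
  have hAR : A.card ≤ R.card := by
    have h1 : A.card * c ≤ R.card * c := le_trans (by nlinarith) hmain
    exact Nat.le_of_mul_le_mul_right h1 hcpos
  constructor
  · omega
  · intro heq
    have hAReq : A.card = R.card := by omega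
    by_contra hcon
    have hε1 : ε = 1 := by rw [hεdef, if_neg hcon]
    -- then A.card = 0 = R.card
    have hA0 : A.card = 0 := by
      rw [hε1, hAReq] at hmain
      nlinarith
    have hR0 : R.card = 0 := by omega
    -- but R is nonempty
    obtain ⟨M, hMH, hIM, hMmax⟩ := aux_exists_base H I hI
    have hmuM : mu H ≤ M.card := Nat.sInf_le ⟨M, hMH, hMmax, rfl⟩
    have hMcard : r + s - t + 1 ≤ M.card := le_trans hmu hmuM
    have hPI : Disjoint (M \ I) I := Finset.sdiff_disjoint
    have hPcard : (M \ I).card = M.card - q := by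
      rw [Finset.card_sdiff_of_subset hIM]
    have hcount := aux_count_ge (M \ I) I hPI s s t le_rfl ht hIt (by omega)
    rw [Nat.choose_self] at hcount
    have hne : ((((M \ I) ∪ I).powersetCard s).filter
        (fun F => (F ∩ I).card ≤ t - 1)).Nonempty := by
      rw [← Finset.card_pos]; omega
    obtain ⟨F, hF⟩ := hne
    rw [Finset.mem_filter, Finset.mem_powersetCard, Finset.sdiff_union_of_subset hIM] at hF
    have hFR : F ∈ R := by
      rw [hRdef, Finset.mem_filter]
      exact ⟨hH M hMH F hF.1.1, hF.1.2, hF.2⟩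
    have := Finset.card_pos.2 ⟨F, hFR⟩
    omega
end

section
/- Let A and B be non-empty cross-t-intersecting families such that every set in A has size r, every set in B has size s, and B is not a trivial t-intersecting family (i.e., the sets in B do not all share t common elements). Then there exist B₀, X ∈ B, a t-element subset T of B₀, and an element x ∈ X \ T, such that |A| ≤ s · C(s, t) · |A(T ∪ {x})|. -/
theorem stmt_6 {α : Type*} [DecidableEq α] (t r s : ℕ)
    (A B : Finset (Finset α)) (hAne : A.Nonempty) (hBne : B.Nonempty)
    (hcross : ∀ A' ∈ A, ∀ B' ∈ B, t ≤ (A' ∩ B').card)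
    (hAuniform : ∀ A' ∈ A, A'.card = r)
    (hBuniform : ∀ B' ∈ B, B'.card = s)
    (hBnontrivial : ¬ ∃ T : Finset α, T.card = t ∧ ∀ B' ∈ B, T ⊆ B') :
    ∃ B₀ ∈ B, ∃ X ∈ B, ∃ T ⊆ B₀, T.card = t ∧ ∃ x ∈ X \ T,
      A.card ≤ s * Nat.choose s t * (A.filter (fun A' => insert x T ⊆ A')).card := by
  classical
  obtain ⟨B₀, hB₀⟩ := hBne
  obtain ⟨A₁, hA₁⟩ := hAne
  have hB₀card : B₀.card = s := hBuniform B₀ hB₀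
  have hts : t ≤ s := by
    calc t ≤ (A₁ ∩ B₀).card := hcross A₁ hA₁ B₀ hB₀
      _ ≤ B₀.card := Finset.card_le_card Finset.inter_subset_right
      _ = s := hB₀card
  have hXex : ∀ T : Finset α, T.card = t → ∃ X ∈ B, ¬ T ⊆ X := by
    intro T hT
    by_contra h
    push_neg at h
    exact hBnontrivial ⟨T, hT, h⟩
  have key : ∀ T : Finset α, ∃ X, T.card = t → X ∈ B ∧ ¬ T ⊆ X := by
    intro T
    by_cases h : T.card = t
    · obtain ⟨X, hX1, hX2⟩ := hXex T h
      exact ⟨X, fun _ => ⟨hX1, hX2⟩⟩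
    · exact ⟨∅, fun h' => absurd h' h⟩
  choose X hXspec using key
  set P : Finset (Finset α) := B₀.powersetCard t with hPdef
  have hPcardmem : ∀ T ∈ P, T.card = t := fun T hT =>
    (Finset.mem_powersetCard.mp hT).2
  have hPsub : ∀ T ∈ P, T ⊆ B₀ := fun T hT =>
    (Finset.mem_powersetCard.mp hT).1
  have hXB : ∀ T ∈ P, X T ∈ B := fun T hT => (hXspec T (hPcardmem T hT)).1
  have hXnsub : ∀ T ∈ P, ¬ T ⊆ X T := fun T hT => (hXspec T (hPcardmem T hT)).2
  have hXcard : ∀ T ∈ P, (X T).card = s := fun T hT => hBuniform _ (hXB T hT)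
  -- the sigma index set of pairs (T, x)
  set S : Finset ((_ : Finset α) × α) := P.sigma (fun T => X T \ T) with hSdef
  set f : ((_ : Finset α) × α) → ℕ :=
    fun p => (A.filter (fun A' => insert p.2 p.1 ⊆ A')).card with hfdef
  -- covering
  have hcover : A ⊆ P.biUnion (fun T => (X T \ T).biUnion
      (fun x => A.filter (fun A' => insert x T ⊆ A'))) := by
    intro A' hA'
    have h1 : t ≤ (A' ∩ B₀).card := hcross A' hA' B₀ hB₀
    obtain ⟨T, hTsub, hTcard⟩ := Finset.exists_subset_card_eq h1
    have hTP : T ∈ P := Finset.mem_powersetCard.mpr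
      ⟨hTsub.trans Finset.inter_subset_right, hTcard⟩
    have hTA : T ⊆ A' := hTsub.trans Finset.inter_subset_left
    have h2 : t ≤ (A' ∩ X T).card := hcross A' hA' _ (hXB T hTP)
    have h3 : ¬ (A' ∩ X T ⊆ T) := by
      intro hsub
      have heq : A' ∩ X T = T := Finset.eq_of_subset_of_card_le hsub (hTcard ▸ h2)
      exact hXnsub T hTP (heq.symm.le.trans Finset.inter_subset_right)
    obtain ⟨x, hx1, hx2⟩ := Finset.not_subset.mp h3
    have hxX : x ∈ X T \ T := Finset.mem_sdiff.mpr
      ⟨(Finset.mem_inter.mp hx1).2, hx2⟩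
    refine Finset.mem_biUnion.mpr ⟨T, hTP, Finset.mem_biUnion.mpr ⟨x, hxX, ?_⟩⟩
    exact Finset.mem_filter.mpr ⟨hA',
      Finset.insert_subset (Finset.mem_inter.mp hx1).1 hTA⟩
  have hsum : A.card ≤ ∑ p ∈ S, f p := by
    calc A.card ≤ (P.biUnion (fun T => (X T \ T).biUnion
          (fun x => A.filter (fun A' => insert x T ⊆ A')))).card :=
        Finset.card_le_card hcover
      _ ≤ ∑ T ∈ P, ((X T \ T).biUnion
          (fun x => A.filter (fun A' => insert x T ⊆ A'))).card :=
        Finset.card_biUnion_le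
      _ ≤ ∑ T ∈ P, ∑ x ∈ X T \ T,
          (A.filter (fun A' => insert x T ⊆ A')).card :=
        Finset.sum_le_sum (fun T _ => Finset.card_biUnion_le)
      _ = ∑ p ∈ S, f p := by rw [hSdef, Finset.sum_sigma]
  -- S is nonempty
  have hPne : P.Nonempty := Finset.powersetCard_nonempty.mpr (hB₀card ▸ hts)
  have hSne : S.Nonempty := by
    obtain ⟨T, hT⟩ := hPne
    have : (X T \ T).Nonempty := by
      rw [Finset.sdiff_nonempty]
      intro hsub
      have hXeq : X T = T := Finset.eq_of_subset_of_card_le hsub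
        (by rw [hXcard T hT, hPcardmem T hT]; exact hts)
      exact hXnsub T hT hXeq.ge
    obtain ⟨x, hx⟩ := this
    exact ⟨⟨T, x⟩, Finset.mem_sigma.mpr ⟨hT, hx⟩⟩
  obtain ⟨p₀, hp₀S, hp₀max⟩ := Finset.exists_max_image S f hSne
  have hScard : S.card ≤ s.choose t * s := by
    rw [hSdef, Finset.card_sigma]
    calc ∑ T ∈ P, (X T \ T).card ≤ ∑ T ∈ P, s :=
        Finset.sum_le_sum (fun T hT =>
          (Finset.card_le_card (Finset.sdiff_subset)).trans (hXcard T hT).le)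
      _ = P.card * s := by rw [Finset.sum_const, smul_eq_mul]
      _ = s.choose t * s := by
        rw [hPdef, Finset.card_powersetCard, hB₀card]
  have hfinal : A.card ≤ s * s.choose t * f p₀ := by
    calc A.card ≤ ∑ p ∈ S, f p := hsum
      _ ≤ S.card * f p₀ := Finset.sum_le_card_nsmul S f (f p₀) (fun p hp => hp₀max p hp)
      _ ≤ (s.choose t * s) * f p₀ := Nat.mul_le_mul_right _ hScard
      _ = s * s.choose t * f p₀ := by ring
  obtain ⟨T₀, x₀⟩ := p₀
  have hT₀P : T₀ ∈ P := (Finset.mem_sigma.mp hp₀S).1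
  have hx₀ : x₀ ∈ X T₀ \ T₀ := (Finset.mem_sigma.mp hp₀S).2
  exact ⟨B₀, hB₀, X T₀, hXB T₀ hT₀P, T₀, hPsub T₀ hT₀P, hPcardmem T₀ hT₀P,
    x₀, hx₀, hfinal⟩
end

section
/- If 1 ≤ t ≤ r < s and n ≥ c(r,s,t) where c(r,s,t) = r + (s−t)·max{2·C(s,t), 2^r·(r−t)·C(r,t) + 1}, then C(s,t) ≤ (1/2) · C(n−r, s−r)/C(s−t, s−r). -/
def cBound (r s t : ℕ) : ℕ :=
  r + (s - t) * max (2 * Nat.choose s t) (2 ^ r * (r - t) * Nat.choose r t + 1)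

lemma descFac_mul_le (m b : ℕ) (hm : 1 ≤ m) :
    ∀ k, m ^ k * Nat.descFactorial b k ≤ Nat.descFactorial (m * b) k := by
  intro k
  induction k with
  | zero => simp
  | succ k ih =>
    rw [pow_succ, Nat.descFactorial_succ, Nat.descFactorial_succ]
    have h1 : m * (b - k) ≤ m * b - k := by
      have h2 : m * (b - k) = m * b - m * k := Nat.mul_sub m b k
      have h3 : k ≤ m * k := Nat.le_mul_of_pos_left k hm
      omega
    calc m ^ k * m * ((b - k) * Nat.descFactorial b k)
        = (m * (b - k)) * (m ^ k * Nat.descFactorial b k) := by ring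
      _ ≤ (m * b - k) * Nat.descFactorial (m * b) k := Nat.mul_le_mul h1 ih

lemma choose_mul_le (m b k : ℕ) (hm : 1 ≤ m) (hk : 1 ≤ k) :
    m * Nat.choose b k ≤ Nat.choose (m * b) k := by
  have h := descFac_mul_le m b hm k
  rw [Nat.descFactorial_eq_factorial_mul_choose, Nat.descFactorial_eq_factorial_mul_choose] at h
  have hmk : m ≤ m ^ k := Nat.le_self_pow (by omega) m
  have hfac : 0 < Nat.factorial k := Nat.factorial_pos k
  have hkey : Nat.factorial k * (m * Nat.choose b k)
      ≤ Nat.factorial k * Nat.choose (m * b) k := by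
    calc Nat.factorial k * (m * Nat.choose b k)
        = m * (Nat.factorial k * Nat.choose b k) := by ring
      _ ≤ m ^ k * (Nat.factorial k * Nat.choose b k) :=
          Nat.mul_le_mul_right _ hmk
      _ ≤ Nat.factorial k * Nat.choose (m * b) k := by linarith [h]
  exact Nat.le_of_mul_le_mul_left hkey hfac

theorem stmt_9 (t r s n : ℕ) (ht : 1 ≤ t) (htr : t ≤ r) (hrs : r < s)
    (hn : cBound r s t ≤ n) :
    (Nat.choose s t : ℚ)
      ≤ (1 / 2) * (Nat.choose (n - r) (s - r) : ℚ) / (Nat.choose (s - t) (s - r) : ℚ) := by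
  set m := 2 * Nat.choose s t with hm
  have hcst : 1 ≤ Nat.choose s t := Nat.choose_pos (by omega)
  have hm1 : 1 ≤ m := by omega
  have hk1 : 1 ≤ s - r := by omega
  have hnr : m * (s - t) ≤ n - r := by
    have h1 : (s - t) * m
        ≤ (s - t) * max (2 * Nat.choose s t) (2 ^ r * (r - t) * Nat.choose r t + 1) :=
      Nat.mul_le_mul_left _ (le_max_left _ _)
    have h2 : r + (s - t) * max (2 * Nat.choose s t) (2 ^ r * (r - t) * Nat.choose r t + 1)
        ≤ n := hn
    rw [Nat.mul_comm]
    omega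
  have key : m * Nat.choose (s - t) (s - r) ≤ Nat.choose (n - r) (s - r) :=
    le_trans (choose_mul_le m (s - t) (s - r) hm1 hk1)
      (Nat.choose_le_choose _ hnr)
  have hdenom : 0 < Nat.choose (s - t) (s - r) := Nat.choose_pos (by omega)
  have hdQ : (0 : ℚ) < (Nat.choose (s - t) (s - r) : ℚ) := by exact_mod_cast hdenom
  rw [le_div_iff₀ hdQ]
  have keyQ : (m : ℚ) * Nat.choose (s - t) (s - r) ≤ Nat.choose (n - r) (s - r) := by
    exact_mod_cast key
  push_cast [hm] at keyQ
  linarith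
end

section
/- Let H be a hereditary family, I ∈ H with t < |I| ≤ r and t < r, and suppose μ(H) ≥ 3r. Then {A ∈ H : |A| = r, |A ∩ I| ≥ t} strictly contains {A ∈ H : |A| = r, I ⊆ A}; in particular there exists an r-element set in H meeting I in exactly t elements but not containing I. -/
theorem stmt_16 {α : Type*} [DecidableEq α] (t r : ℕ)
    (H : Finset (Finset α)) (hH : Hereditary H)
    (I : Finset α) (hI : I ∈ H) (hIt : t < I.card) (hIr : I.card ≤ r) (htr : t < r)
    (hmu : 3 * r ≤ mu H) :
    H.filter (fun A => A.card = r ∧ I ⊆ A)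
        ⊂ H.filter (fun A => A.card = r ∧ t ≤ (A ∩ I).card) ∧
      ∃ A ∈ H, A.card = r ∧ (A ∩ I).card = t ∧ ¬ I ⊆ A := by
  classical
  -- take a member of H containing I of maximal cardinality
  obtain ⟨B, hBmem, hBmax⟩ := (H.filter (fun A => I ⊆ A)).exists_max_image
    Finset.card ⟨I, Finset.mem_filter.2 ⟨hI, Finset.Subset.refl I⟩⟩
  obtain ⟨hBH, hIB⟩ := Finset.mem_filter.1 hBmem
  have hmaxB : ∀ A ∈ H, ¬ B ⊂ A := by
    intro A hA hBA
    have hIA : I ⊆ A := hIB.trans hBA.subset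
    have := hBmax A (Finset.mem_filter.2 ⟨hA, hIA⟩)
    exact absurd (Finset.card_lt_card hBA) (not_lt.2 this)
  have hmuB : mu H ≤ B.card := Nat.sInf_le ⟨B, hBH, hmaxB, rfl⟩
  have hB3 : 3 * r ≤ B.card := hmu.trans hmuB
  -- pick T ⊆ I of size t
  obtain ⟨T, hTI, hTcard⟩ := Finset.exists_subset_card_eq (s := I) (n := t) hIt.le
  -- pick X ⊆ B \ I of size r - t
  have hBIcard : r - t ≤ (B \ I).card := by
    have := Finset.card_sdiff_of_subset hIB
    omega
  obtain ⟨X, hXBI, hXcard⟩ := Finset.exists_subset_card_eq (s := B \ I) (n := r - t) hBIcard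
  set A := T ∪ X with hAdef
  have hXI : ∀ x ∈ X, x ∉ I := fun x hx => (Finset.mem_sdiff.1 (hXBI hx)).2
  have hdisj : Disjoint T X := by
    rw [Finset.disjoint_left]
    intro x hxT hxX
    exact hXI x hxX (hTI hxT)
  have hAB : A ⊆ B := Finset.union_subset (hTI.trans hIB)
    (hXBI.trans (Finset.sdiff_subset))
  have hAH : A ∈ H := hH B hBH A hAB
  have hAcard : A.card = r := by
    rw [hAdef, Finset.card_union_of_disjoint hdisj, hTcard, hXcard]
    omega
  have hAI : A ∩ I = T := by
    apply Finset.Subset.antisymm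
    · intro x hx
      obtain ⟨hxA, hxI⟩ := Finset.mem_inter.1 hx
      rcases Finset.mem_union.1 hxA with h | h
      · exact h
      · exact absurd hxI (hXI x h)
    · intro x hx
      exact Finset.mem_inter.2 ⟨Finset.mem_union_left _ hx, hTI hx⟩
  have hAIcard : (A ∩ I).card = t := by rw [hAI, hTcard]
  have hnIA : ¬ I ⊆ A := by
    intro h
    have : I ⊆ A ∩ I := Finset.subset_inter h (Finset.Subset.refl I)
    have := Finset.card_le_card this
    omega
  constructor
  · rw [Finset.ssubset_iff_of_subset]
    · exact ⟨A, Finset.mem_filter.2 ⟨hAH, hAcard, hAIcard.ge⟩,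
        fun h => hnIA (Finset.mem_filter.1 h).2.2⟩
    · intro C hC
      obtain ⟨hCH, hCr, hIC⟩ := Finset.mem_filter.1 hC
      refine Finset.mem_filter.2 ⟨hCH, hCr, ?_⟩
      have : C ∩ I = I := Finset.inter_eq_right.2 hIC
      rw [this]
      exact hIt.le
  · exact ⟨A, hAH, hAcard, hAIcard, hnIA⟩
end
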